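/- arXiv:2305.04495 — 4 statements merged into one kernel-verified Lean document; each statement's English description precedes it below -/
import Mathlib

section
/- Let A, B, C ∈ ℝ^{n×n} with C invertible. If σ_max(B) < σ_min(AC⁻¹), then for every F ∈ ℝ^{n×n} the new generalized absolute value matrix equation AX + B|CX| = F has exactly one solution X ∈ ℝ^{n×n}. -/
open Matrix

/-- Componentwise absolute value of a real matrix. -/
noncomputable def matAbs {n : ℕ} (M : Matrix (Fin n) (Fin n) ℝ) : Matrix (Fin n) (Fin n) ℝ :=
  fun i j => |M i j|

/-- Largest singular value: the square root of the largest eigenvalue of MᵀM. -/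
noncomputable def sigmaMax {n : ℕ} (M : Matrix (Fin n) (Fin n) ℝ) : ℝ :=
  Real.sqrt (sSup (spectrum ℝ (Mᵀ * M)))

/-- Smallest singular value: the square root of the smallest eigenvalue of MᵀM. -/
noncomputable def sigmaMin {n : ℕ} (M : Matrix (Fin n) (Fin n) ℝ) : ℝ :=
  Real.sqrt (sInf (spectrum ℝ (Mᵀ * M)))

/-!
Substituting `Y = C X` turns the equation, column by column, into `M y + B |y| = f` with
`M = A C⁻¹`. The Rayleigh bounds `σ_min(M) ‖y‖ ≤ ‖M y‖` and `‖B z‖ ≤ σ_max(B) ‖z‖` make `M`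
invertible and, since `|·|` is `1`-Lipschitz, make `y ↦ M⁻¹ (f - B |y|)` a contraction of
Euclidean space with constant `σ_max(B) / σ_min(M) < 1`; its unique fixed point is the unique
solution.
-/

open Function WithLp
open scoped NNReal MatrixOrder

theorem AddEquiv.bijective_add_of_lipschitzWith {E : Type*} [NormedAddCommGroup E]
    [CompleteSpace E] (L : E ≃+ E) {N : E → E} {a b : ℝ≥0} (hL : ∀ x, a * ‖x‖ ≤ ‖L x‖)
    (hN : LipschitzWith b N) (hba : b < a) : Bijective fun x ↦ L x + N x := by
  have ha : 0 < a := pos_of_gt hba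
  have hL_symm : LipschitzWith a⁻¹ L.symm :=
    AddMonoidHomClass.lipschitz_of_bound_nnnorm L.symm a⁻¹ fun y ↦ by
      rw [← NNReal.coe_le_coe, NNReal.coe_mul, coe_nnnorm, coe_nnnorm, NNReal.coe_inv,
        inv_mul_eq_div, le_div_iff₀' (by exact_mod_cast ha)]
      simpa using hL (L.symm y)
  refine bijective_iff_existsUnique _ |>.mpr fun f ↦ ?_
  have hT : ContractingWith (a⁻¹ * b) fun y ↦ L.symm (f - N y) := by
    refine ⟨?_, hL_symm.comp <| LipschitzWith.of_dist_le_mul fun y z ↦ ?_⟩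
    · rwa [inv_mul_lt_iff₀ ha, mul_one]
    · rw [dist_sub_left]
      exact hN.dist_le_mul y z
  have hfix (y : E) : IsFixedPt (fun y ↦ L.symm (f - N y)) y ↔ L y + N y = f := by
    rw [IsFixedPt, AddEquiv.symm_apply_eq, sub_eq_iff_eq_add, eq_comm]
  exact ⟨_, (hfix _).mp hT.fixedPoint_isFixedPt,
    fun y hy ↦ hT.fixedPoint_unique' ((hfix y).mpr hy) hT.fixedPoint_isFixedPt⟩

section

variable {ι : Type*} [Fintype ι]

-- The continuous functional calculus turns the spectral bound into the Loewner bound `S ≤ r • 1`.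
theorem Matrix.IsHermitian.dotProduct_mulVec_le [DecidableEq ι] {S : Matrix ι ι ℝ}
    (hS : S.IsHermitian) {r : ℝ} (h : ∀ μ ∈ spectrum ℝ S, μ ≤ r) (x : ι → ℝ) :
    x ⬝ᵥ (S *ᵥ x) ≤ r * (x ⬝ᵥ x) := by
  have := (le_algebraMap_of_spectrum_le h hS.isSelfAdjoint).dotProduct_mulVec_nonneg x
  simpa [Algebra.algebraMap_eq_smul_one, sub_mulVec, smul_mulVec] using this

theorem Matrix.IsHermitian.le_dotProduct_mulVec [DecidableEq ι] {S : Matrix ι ι ℝ}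
    (hS : S.IsHermitian) {r : ℝ} (h : ∀ μ ∈ spectrum ℝ S, r ≤ μ) (x : ι → ℝ) :
    r * (x ⬝ᵥ x) ≤ x ⬝ᵥ (S *ᵥ x) := by
  have := (algebraMap_le_of_le_spectrum h hS.isSelfAdjoint).dotProduct_mulVec_nonneg x
  simpa [Algebra.algebraMap_eq_smul_one, sub_mulVec, smul_mulVec] using this

theorem Matrix.isHermitian_transpose_mul_self (B : Matrix ι ι ℝ) : (Bᵀ * B).IsHermitian :=
  isHermitian_iff_isSymm.mpr (isSymm_transpose_mul_self B)

theorem EuclideanSpace.norm_sq_eq_dotProduct (x : EuclideanSpace ℝ ι) :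
    ‖x‖ ^ 2 = ofLp x ⬝ᵥ ofLp x := by
  rw [← real_inner_self_eq_norm_sq, EuclideanSpace.inner_eq_star_dotProduct]
  simp

theorem Matrix.norm_toLpLin_sq [DecidableEq ι] (B : Matrix ι ι ℝ) (x : EuclideanSpace ℝ ι) :
    ‖toLpLin 2 2 B x‖ ^ 2 = ofLp x ⬝ᵥ ((Bᵀ * B) *ᵥ ofLp x) := by
  rw [← real_inner_self_eq_norm_sq, EuclideanSpace.inner_eq_star_dotProduct, ← mulVec_mulVec,
    dotProduct_mulVec, vecMul_transpose]
  simp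

theorem EuclideanSpace.lipschitzWith_abs :
    LipschitzWith 1 fun y : EuclideanSpace ℝ ι ↦ toLp 2 |ofLp y| := by
  refine LipschitzWith.of_dist_le_mul fun y z ↦ ?_
  simp only [EuclideanSpace.dist_eq, NNReal.coe_one, one_mul, Real.dist_eq, Pi.abs_apply]
  exact Real.sqrt_le_sqrt <| Finset.sum_le_sum fun i _ ↦
    pow_le_pow_left₀ (abs_nonneg _) (abs_abs_sub_abs_le_abs_sub _ _) 2

end

section

variable {n : ℕ}

theorem norm_toLpLin_le_sigmaMax (B : Matrix (Fin n) (Fin n) ℝ) (x : EuclideanSpace ℝ (Fin n)) :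
    ‖toLpLin 2 2 B x‖ ≤ sigmaMax B * ‖x‖ := by
  have hspec (μ) (hμ : μ ∈ spectrum ℝ (Bᵀ * B)) := le_csSup finite_real_spectrum.bddAbove hμ
  calc ‖toLpLin 2 2 B x‖ = √(‖toLpLin 2 2 B x‖ ^ 2) := (Real.sqrt_sq (norm_nonneg _)).symm
    _ ≤ √(sSup (spectrum ℝ (Bᵀ * B)) * ‖x‖ ^ 2) := by
      rw [B.norm_toLpLin_sq, EuclideanSpace.norm_sq_eq_dotProduct]
      exact Real.sqrt_le_sqrt (B.isHermitian_transpose_mul_self.dotProduct_mulVec_le hspec _)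
    _ = sigmaMax B * ‖x‖ := by
      rw [Real.sqrt_mul' _ (sq_nonneg _), Real.sqrt_sq (norm_nonneg _), sigmaMax]

theorem sigmaMin_mul_norm_le (M : Matrix (Fin n) (Fin n) ℝ) (x : EuclideanSpace ℝ (Fin n)) :
    sigmaMin M * ‖x‖ ≤ ‖toLpLin 2 2 M x‖ := by
  have hspec (μ) (hμ : μ ∈ spectrum ℝ (Mᵀ * M)) := csInf_le finite_real_spectrum.bddBelow hμ
  calc sigmaMin M * ‖x‖ = √(sInf (spectrum ℝ (Mᵀ * M)) * ‖x‖ ^ 2) := by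
        rw [Real.sqrt_mul' _ (sq_nonneg _), Real.sqrt_sq (norm_nonneg _), sigmaMin]
    _ ≤ √(‖toLpLin 2 2 M x‖ ^ 2) := by
      rw [M.norm_toLpLin_sq, EuclideanSpace.norm_sq_eq_dotProduct]
      exact Real.sqrt_le_sqrt (M.isHermitian_transpose_mul_self.le_dotProduct_mulVec hspec _)
    _ = ‖toLpLin 2 2 M x‖ := Real.sqrt_sq (norm_nonneg _)

theorem bijective_mulVec_add_mulVec_abs {M B : Matrix (Fin n) (Fin n) ℝ}
    (h : sigmaMax B < sigmaMin M) : Bijective fun y : Fin n → ℝ ↦ M *ᵥ y + B *ᵥ |y| := by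
  have hM_pos : 0 < sigmaMin M := (Real.sqrt_nonneg _).trans_lt h
  have hM (x : EuclideanSpace ℝ (Fin n)) :
      (sigmaMin M).toNNReal * ‖x‖ ≤ ‖toLpLin 2 2 M x‖ := by
    rw [Real.coe_toNNReal _ hM_pos.le]
    exact sigmaMin_mul_norm_le M x
  have hinj : Injective (toLpLin 2 2 M) := by
    refine (injective_iff_map_eq_zero _).mpr fun x hx ↦ ?_
    have := sigmaMin_mul_norm_le M x
    rw [hx, norm_zero] at this
    exact norm_le_zero_iff.mp (nonpos_of_mul_nonpos_right this hM_pos)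
  have hN : LipschitzWith (sigmaMax B).toNNReal fun y : EuclideanSpace ℝ (Fin n) ↦
      toLpLin 2 2 B (toLp 2 |ofLp y|) := by
    have := (AddMonoidHomClass.lipschitz_of_bound (toLpLin 2 2 B) _
      (norm_toLpLin_le_sigmaMax B)).comp EuclideanSpace.lipschitzWith_abs
    rwa [mul_one] at this
  have hE := (LinearEquiv.ofInjectiveEndo _ hinj).toAddEquiv.bijective_add_of_lipschitzWith hM hN
    ((Real.toNNReal_lt_toNNReal_iff hM_pos).mpr h)
  let e := EuclideanSpace.equiv (Fin n) ℝ
  exact e.bijective.comp (hE.comp e.symm.bijective)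

theorem bijective_mul_add_mul_matAbs {A B C : Matrix (Fin n) (Fin n) ℝ} (hC : IsUnit C)
    (h : sigmaMax B < sigmaMin (A * C⁻¹)) :
    Bijective fun X : Matrix (Fin n) (Fin n) ℝ ↦ A * X + B * matAbs (C * X) := by
  have hcol : Bijective fun x : Fin n → ℝ ↦ A *ᵥ x + B *ᵥ |C *ᵥ x| := by
    have hC_mulVec : Bijective (C *ᵥ ·) :=
      ⟨mulVec_injective_iff_isUnit.mpr hC, mulVec_surjective_iff_isUnit.mpr hC⟩
    convert (bijective_mulVec_add_mulVec_abs h).comp hC_mulVec using 2 with x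
    rw [Function.comp_apply, mulVec_mulVec, mul_assoc,
      nonsing_inv_mul _ ((isUnit_iff_isUnit_det C).mp hC), mul_one]
  -- Transposing turns a matrix into the family of its columns.
  have hT : Bijective (transpose : Matrix (Fin n) (Fin n) ℝ → _) :=
    (transpose_involutive _ _).bijective
  exact hT.comp ((Bijective.piMap fun _ ↦ hcol).comp hT)

end

/-- If C is invertible and σ_max(B) < σ_min(AC⁻¹), then for every F the NGAVME
AX + B|CX| = F has exactly one solution. -/
theorem ngavme_unique_of_sigma {n : ℕ} (A B C : Matrix (Fin n) (Fin n) ℝ)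
    (hC : IsUnit C) (h : sigmaMax B < sigmaMin (A * C⁻¹)) :
    ∀ F : Matrix (Fin n) (Fin n) ℝ,
      ∃! X : Matrix (Fin n) (Fin n) ℝ, A * X + B * matAbs (C * X) = F :=
  (bijective_mul_add_mul_matAbs hC h).existsUnique
end

section
/- Let A, B, C ∈ ℝ^{n×n} with A invertible. If the spectral radius ρ(|CA⁻¹|·|B|) < 1, then for every F ∈ ℝ^{n×n} the new generalized absolute value matrix equation AX + B|CX| = F has exactly one solution X ∈ ℝ^{n×n}. -/
/-!
Put `Y = |CX|`. Since `A` is invertible, `X` solves `AX + B|CX| = F` exactly when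
`X = A⁻¹(F - BY)` and `Y` is a fixed point of `T Y = |CA⁻¹(F - BY)|`. By the reverse triangle
inequality `|T Y - T Y'| ≤ M |Y - Y'|` entrywise with `M = |CA⁻¹| |B| ≥ 0`, hence
`|Tᵏ Y - Tᵏ Y'| ≤ Mᵏ |Y - Y'|` and `Tᵏ` is `‖Mᵏ‖∞`-Lipschitz. Gelfand's formula turns `ρ(M) < 1`
into `‖Mᵏ‖∞ < 1` for some `k`, and Banach's fixed point theorem applied to `Tᵏ` gives a unique
fixed point of `T`.
-/

open Matrix Function

/-- Spectral radius of a real square matrix: the supremum of |λ| over its complex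
eigenvalues (the complex spectrum of the matrix viewed over ℂ). -/
noncomputable def specRad {m : Type*} [Fintype m] [DecidableEq m]
    (M : Matrix m m ℝ) : ℝ :=
  sSup ((fun z : ℂ => ‖z‖) '' spectrum ℂ (M.map Complex.ofReal))

attribute [local instance] Matrix.linftyOpNormedAddCommGroup Matrix.linftyOpNormedSpace
  Matrix.linftyOpNormedRing Matrix.linftyOpNormedAlgebra

theorem exists_pow_nnnorm_lt_one_of_spectralRadius_lt_one {A : Type*} [NormedRing A]
    [NormedAlgebra ℂ A] [CompleteSpace A] {a : A} (h : spectralRadius ℂ a < 1) :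
    ∃ k : ℕ, ‖a ^ k‖₊ < 1 := by
  obtain ⟨k, hk, hk_pos⟩ :=
    (((spectrum.pow_nnnorm_pow_one_div_tendsto_nhds_spectralRadius a).eventually_lt_const
      h).and (Filter.eventually_gt_atTop 0)).exists
  have hk_pos' : (0 : ℝ) < k := Nat.cast_pos.mpr hk_pos
  have := ENNReal.rpow_lt_one hk hk_pos'
  rw [← ENNReal.rpow_mul, one_div_mul_cancel hk_pos'.ne', ENNReal.rpow_one] at this
  exact ⟨k, ENNReal.coe_lt_one_iff.mp this⟩

namespace Matrix

variable {l m n : Type*} [Fintype m]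

theorem linfty_opNNNorm_map_eq [Fintype n] {α β : Type*} [NormedAddCommGroup α]
    [NormedAddCommGroup β] (X : Matrix m n α) (f : α → β) (hf : ∀ a, ‖f a‖₊ = ‖a‖₊) :
    ‖X.map f‖₊ = ‖X‖₊ := by
  simp only [linfty_opNNNorm_def, map_apply, hf]

theorem linfty_opNNNorm_le_of_abs_le [Fintype n] {X Y : Matrix m n ℝ}
    (h : ∀ i j, |X i j| ≤ Y i j) : ‖X‖₊ ≤ ‖Y‖₊ := by
  rw [linfty_opNNNorm_def, linfty_opNNNorm_def]
  refine Finset.sup_mono_fun fun i _ => Finset.sum_le_sum fun j _ => ?_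
  rw [← NNReal.coe_le_coe, coe_nnnorm, coe_nnnorm, Real.norm_eq_abs, Real.norm_eq_abs]
  exact (h i j).trans (le_abs_self _)

theorem abs_mul_apply_le (P : Matrix l m ℝ) (Q : Matrix m n ℝ) (i : l) (j : n) :
    |(P * Q) i j| ≤ (P.map abs * Q.map abs) i j := by
  simp only [mul_apply, map_apply, ← abs_mul]
  exact Finset.abs_sum_le_sum_abs _ _

theorem mul_apply_nonneg {P : Matrix l m ℝ} {Q : Matrix m n ℝ} (hP : ∀ i k, 0 ≤ P i k)
    (hQ : ∀ k j, 0 ≤ Q k j) (i : l) (j : n) : 0 ≤ (P * Q) i j :=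
  Finset.sum_nonneg fun k _ => mul_nonneg (hP i k) (hQ k j)

theorem mul_apply_le_mul_apply_of_le_right {P : Matrix l m ℝ} {Q Q' : Matrix m n ℝ}
    (hP : ∀ i k, 0 ≤ P i k) (hQ : ∀ k j, Q k j ≤ Q' k j) (i : l) (j : n) :
    (P * Q) i j ≤ (P * Q') i j :=
  Finset.sum_le_sum fun k _ => mul_le_mul_of_nonneg_left (hQ k j) (hP i k)

theorem mul_apply_le_mul_apply_of_le_left {P P' : Matrix l m ℝ} {Q : Matrix m n ℝ}
    (hQ : ∀ k j, 0 ≤ Q k j) (hP : ∀ i k, P i k ≤ P' i k) (i : l) (j : n) :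
    (P * Q) i j ≤ (P' * Q) i j :=
  Finset.sum_le_sum fun k _ => mul_le_mul_of_nonneg_right (hP i k) (hQ k j)

theorem abs_mul_mul_apply_le {o : Type*} [Fintype o] (P : Matrix l m ℝ) (Q : Matrix m o ℝ)
    (R : Matrix o n ℝ) (i : l) (j : n) : |(P * Q * R) i j| ≤ (P.map abs * Q.map abs * R.map abs) i j :=
  (abs_mul_apply_le _ R i j).trans <| mul_apply_le_mul_apply_of_le_left
    (fun _ _ => abs_nonneg _) (fun i k => by simpa using abs_mul_apply_le P Q i k) i j

theorem abs_sub_map_abs_mul_sub_apply_le {o : Type*} [Fintype o] (P : Matrix l m ℝ)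
    (B : Matrix m o ℝ) (F : Matrix m n ℝ) (Z Z' : Matrix o n ℝ) (i : l) (j : n) :
    |((P * (F - B * Z)).map abs - (P * (F - B * Z')).map abs) i j|
      ≤ (P.map abs * B.map abs * (Z - Z').map abs) i j :=
  calc _ ≤ |(P * (F - B * Z') - P * (F - B * Z)) i j| := by
        rw [Matrix.sub_apply, Matrix.sub_apply, map_apply, map_apply,
          abs_sub_comm _ ((P * (F - B * Z)) i j)]
        exact abs_abs_sub_abs_le_abs_sub _ _
    _ = |(P * B * (Z - Z')) i j| := by
        rw [Matrix.mul_sub, Matrix.mul_sub, sub_sub_sub_cancel_left, ← Matrix.mul_sub,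
          ← Matrix.mul_sub, Matrix.mul_assoc]
    _ ≤ _ := abs_mul_mul_apply_le P B (Z - Z') i j

variable [DecidableEq m]

theorem spectralRadius_map_ofReal_le (M : Matrix m m ℝ) :
    spectralRadius ℂ (M.map Complex.ofReal) ≤ ENNReal.ofReal (specRad M) := by
  have hbdd : BddAbove ((fun z : ℂ => ‖z‖) '' spectrum ℂ (M.map Complex.ofReal)) :=
    ((spectrum.isCompact _).image continuous_norm).bddAbove
  refine iSup₂_le fun z hz => ?_
  rw [← ENNReal.ofReal_coe_nnreal, coe_nnnorm]
  exact ENNReal.ofReal_le_ofReal (le_csSup hbdd ⟨z, hz, rfl⟩)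

theorem exists_pow_nnnorm_lt_one_of_specRad_lt_one {M : Matrix m m ℝ} (h : specRad M < 1) :
    ∃ k : ℕ, ‖M ^ k‖₊ < 1 := by
  obtain ⟨k, hk⟩ := exists_pow_nnnorm_lt_one_of_spectralRadius_lt_one <|
    (spectralRadius_map_ofReal_le M).trans_lt (ENNReal.ofReal_lt_one.mpr h)
  have hpow : M.map Complex.ofReal ^ k = (M ^ k).map Complex.ofReal :=
    (map_pow Complex.ofRealHom.mapMatrix M k).symm
  rw [hpow, linfty_opNNNorm_map_eq _ _ Complex.nnnorm_real] at hk
  exact ⟨k, hk⟩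

section FixedPoint

variable {T : Matrix m n ℝ → Matrix m n ℝ} {M : Matrix m m ℝ}

theorem abs_iterate_sub_apply_le (hM : ∀ i j, 0 ≤ M i j)
    (hT : ∀ Z Z' i j, |(T Z - T Z') i j| ≤ (M * (Z - Z').map abs) i j) (k : ℕ)
    (Z Z' : Matrix m n ℝ) (i : m) (j : n) :
    |(T^[k] Z - T^[k] Z') i j| ≤ (M ^ k * (Z - Z').map abs) i j := by
  induction k generalizing Z Z' with
  | zero => simp
  | succ k ih =>
    calc |(T^[k + 1] Z - T^[k + 1] Z') i j|
        ≤ (M ^ k * (T Z - T Z').map abs) i j := ih (T Z) (T Z')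
      _ ≤ (M ^ k * (M * (Z - Z').map abs)) i j :=
          mul_apply_le_mul_apply_of_le_right (pow_apply_nonneg hM k) (hT Z Z') i j
      _ = (M ^ (k + 1) * (Z - Z').map abs) i j := by rw [← Matrix.mul_assoc, ← pow_succ]

theorem lipschitzWith_iterate_of_abs_sub_apply_le [Fintype n] (hM : ∀ i j, 0 ≤ M i j)
    (hT : ∀ Z Z' i j, |(T Z - T Z') i j| ≤ (M * (Z - Z').map abs) i j) (k : ℕ) :
    LipschitzWith ‖M ^ k‖₊ T^[k] := by
  refine LipschitzWith.of_dist_le_mul fun Z Z' => ?_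
  rw [dist_eq_norm, dist_eq_norm, ← coe_nnnorm, ← coe_nnnorm, ← NNReal.coe_mul,
    NNReal.coe_le_coe]
  calc ‖T^[k] Z - T^[k] Z'‖₊
      ≤ ‖M ^ k * (Z - Z').map abs‖₊ :=
        linfty_opNNNorm_le_of_abs_le (abs_iterate_sub_apply_le hM hT k Z Z')
    _ ≤ ‖M ^ k‖₊ * ‖(Z - Z').map abs‖₊ := linfty_opNNNorm_mul _ _
    _ = ‖M ^ k‖₊ * ‖Z - Z'‖₊ := by rw [linfty_opNNNorm_map_eq _ _ Real.nnnorm_abs]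

theorem existsUnique_isFixedPt_of_abs_sub_apply_le [Fintype n] (hM : ∀ i j, 0 ≤ M i j)
    (hρ : specRad M < 1)
    (hT : ∀ Z Z' i j, |(T Z - T Z') i j| ≤ (M * (Z - Z').map abs) i j) :
    ∃! Z, IsFixedPt T Z := by
  obtain ⟨k, hk⟩ := exists_pow_nnnorm_lt_one_of_specRad_lt_one hρ
  have hT_k : ContractingWith ‖M ^ k‖₊ T^[k] :=
    ⟨hk, lipschitzWith_iterate_of_abs_sub_apply_le hM hT k⟩
  have : Nonempty (Matrix m n ℝ) := ⟨0⟩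
  exact ⟨_, hT_k.isFixedPt_fixedPoint_iterate, fun Z hZ => hT_k.fixedPoint_unique (hZ.iterate k)⟩

end FixedPoint

end Matrix

theorem ngavme_iff_eq_inv_mul {n : ℕ} {A : Matrix (Fin n) (Fin n) ℝ} [Invertible A]
    {B C F X : Matrix (Fin n) (Fin n) ℝ} :
    A * X + B * matAbs (C * X) = F ↔ X = A⁻¹ * (F - B * matAbs (C * X)) := by
  rw [eq_comm (a := X), inv_mul_eq_iff_eq_mul_of_invertible, sub_eq_iff_eq_add, eq_comm]

/-- If A is invertible and ρ(|CA⁻¹|·|B|) < 1, then for every F the NGAVME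
AX + B|CX| = F has exactly one solution. -/
theorem ngavme_unique_of_specRad_prod {n : ℕ} (A B C : Matrix (Fin n) (Fin n) ℝ)
    (hA : IsUnit A) (h : specRad (matAbs (C * A⁻¹) * matAbs B) < 1) :
    ∀ F : Matrix (Fin n) (Fin n) ℝ,
      ∃! X : Matrix (Fin n) (Fin n) ℝ, A * X + B * matAbs (C * X) = F := by
  intro F
  have := hA.invertible
  set T : Matrix (Fin n) (Fin n) ℝ → Matrix (Fin n) (Fin n) ℝ :=
    fun Y => matAbs (C * A⁻¹ * (F - B * Y))
  obtain ⟨Y, hY, hY_unique⟩ := existsUnique_isFixedPt_of_abs_sub_apply_le (T := T)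
    (mul_apply_nonneg (fun _ _ => abs_nonneg _) (fun _ _ => abs_nonneg _)) h
    (abs_sub_map_abs_mul_sub_apply_le (C * A⁻¹) B F)
  have hCX : matAbs (C * (A⁻¹ * (F - B * Y))) = Y := by rw [← Matrix.mul_assoc]; exact hY
  refine ⟨A⁻¹ * (F - B * Y), ngavme_iff_eq_inv_mul.mpr (by rw [hCX]), fun X hX => ?_⟩
  replace hX := ngavme_iff_eq_inv_mul.mp hX
  have hX_fixed : IsFixedPt T (matAbs (C * X)) := by
    show matAbs (C * A⁻¹ * (F - B * matAbs (C * X))) = matAbs (C * X)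
    rw [Matrix.mul_assoc, ← hX]
  rw [hX, hY_unique _ hX_fixed]
end

section
/- Let A, B, C ∈ ℝ^{n×n} with C invertible, and set R = I ⊗ (AC⁻¹) and S = I ⊗ B in ℝ^{n²×n²}, where I is the n×n identity matrix and ⊗ is the Kronecker product. Suppose each diagonal entry of R+S has the same sign as the corresponding diagonal entry of R−S (i.e. (R+S)_{ii}(R−S)_{ii} > 0 for all i), and both R+S and R−S are strictly diagonally dominant by columns. Then for every F ∈ ℝ^{n×n} the new generalized absolute value matrix equation AX + B|CX| = F has exactly one solution X ∈ ℝ^{n×n}. -/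
open Matrix Kronecker
open scoped NNReal

/-- A real square matrix is strictly diagonally dominant by columns if in each
column the absolute value of the diagonal entry strictly exceeds the sum of the
absolute values of the off-diagonal entries. -/
def StrictlyDiagDominantByColumns {m : Type*} [Fintype m] [DecidableEq m]
    (M : Matrix m m ℝ) : Prop :=
  ∀ j, ∑ i ∈ Finset.univ.erase j, |M i j| < |M j j|

set_option linter.unusedSectionVars false

section aux
variable {m : Type*} [Fintype m] [DecidableEq m]

attribute [local instance] Matrix.linftyOpNormedAddCommGroup Matrix.linftyOpNormedRing
  Matrix.linftyOpNormedSpace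

lemma isUnit_add_mul_diagonal (R S : Matrix m m ℝ)
    (hsign : ∀ j, 0 < (R + S) j j * (R - S) j j)
    (h1 : StrictlyDiagDominantByColumns (R + S))
    (h2 : StrictlyDiagDominantByColumns (R - S))
    (d : m → ℝ) (hd : ∀ i, |d i| ≤ 1) :
    IsUnit (R + S * Matrix.diagonal d) := by
  rw [Matrix.isUnit_iff_isUnit_det, isUnit_iff_ne_zero]
  apply det_ne_zero_of_sum_col_lt_diag
  intro k
  set t := d k with ht
  have ht1 : -1 ≤ t := by have := hd k; rw [abs_le] at this; exact this.1
  have ht2 : t ≤ 1 := by have := hd k; rw [abs_le] at this; exact this.2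
  set α := (1 + t) / 2 with hα
  set β := (1 - t) / 2 with hβ
  have hαnn : 0 ≤ α := by simp only [hα]; linarith
  have hβnn : 0 ≤ β := by simp only [hβ]; linarith
  have hαβ : α + β = 1 := by simp only [hα, hβ]; ring
  have hentry : ∀ i, (R + S * Matrix.diagonal d) i k = α * (R + S) i k + β * (R - S) i k := by
    intro i
    simp only [Matrix.add_apply, Matrix.mul_diagonal, Matrix.sub_apply, hα, hβ, ← ht]
    ring
  simp only [Real.norm_eq_abs, hentry]
  -- off-diagonal sum bound
  have hsum : ∑ i ∈ Finset.univ.erase k, |α * (R + S) i k + β * (R - S) i k|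
      ≤ α * (∑ i ∈ Finset.univ.erase k, |(R + S) i k|)
        + β * (∑ i ∈ Finset.univ.erase k, |(R - S) i k|) := by
    rw [Finset.mul_sum, Finset.mul_sum, ← Finset.sum_add_distrib]
    apply Finset.sum_le_sum
    intro i _
    calc |α * (R + S) i k + β * (R - S) i k|
        ≤ |α * (R + S) i k| + |β * (R - S) i k| := abs_add_le _ _
      _ = α * |(R + S) i k| + β * |(R - S) i k| := by
          rw [abs_mul, abs_mul, abs_of_nonneg hαnn, abs_of_nonneg hβnn]
  -- diagonal equality
  have hdiag : α * |(R + S) k k| + β * |(R - S) k k| ≤ |α * (R + S) k k + β * (R - S) k k| := by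
    rcases mul_pos_iff.mp (hsign k) with ⟨hp, hq⟩ | ⟨hp, hq⟩
    · rw [abs_of_pos hp, abs_of_pos hq, abs_of_nonneg (by positivity)]
    · rw [abs_of_neg hp, abs_of_neg hq]
      rw [abs_of_nonpos (by nlinarith)]
      ring_nf
      exact le_refl _
  refine lt_of_le_of_lt hsum (lt_of_lt_of_le ?_ hdiag)
  -- strict convex combination
  rcases lt_or_eq_of_le hαnn with hαpos | hα0
  · have h1' := h1 k
    have h2' := h2 k
    have := mul_lt_mul_of_pos_left h1' hαpos
    have h2'' := mul_le_mul_of_nonneg_left h2'.le hβnn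
    linarith
  · have hβ1 : β = 1 := by linarith
    have h2' := h2 k
    rw [← hα0, hβ1]
    have h1' := h1 k
    have : 0 ≤ ∑ i ∈ Finset.univ.erase k, |(R + S) i k| :=
      Finset.sum_nonneg fun i _ => abs_nonneg _
    nlinarith


lemma exists_unif_bound (R S : Matrix m m ℝ)
    (hinv : ∀ d : m → ℝ, (∀ i, |d i| ≤ 1) → IsUnit (R + S * Matrix.diagonal d)) :
    ∃ K : ℝ, 0 < K ∧ ∀ d : m → ℝ, (∀ i, |d i| ≤ 1) →
      ∀ v : m → ℝ, ‖v‖ ≤ K * ‖(R + S * Matrix.diagonal d) *ᵥ v‖ := by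
  set M : (m → ℝ) → Matrix m m ℝ := fun d => R + S * Matrix.diagonal d with hM
  have hMcont : Continuous M := by
    apply Continuous.add continuous_const
    exact Continuous.matrix_mul continuous_const (Continuous.matrix_diagonal continuous_id)
  have hmem : ∀ d : m → ℝ, d ∈ Metric.closedBall (0 : m → ℝ) 1 ↔ ∀ i, |d i| ≤ 1 := by
    intro d
    rw [Metric.mem_closedBall, dist_zero_right, pi_norm_le_iff_of_nonneg zero_le_one]
    simp [Real.norm_eq_abs]
  have hcpt : IsCompact (Metric.closedBall (0 : m → ℝ) 1) := isCompact_closedBall _ _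
  have hne : (Metric.closedBall (0 : m → ℝ) 1).Nonempty :=
    ⟨0, Metric.mem_closedBall_self zero_le_one⟩
  -- min of |det|
  have hdetcont : Continuous fun d => |(M d).det| :=
    (Continuous.matrix_det hMcont).abs
  obtain ⟨dmin, hdminmem, hdmin⟩ := hcpt.exists_isMinOn hne hdetcont.continuousOn
  have hdetpos : 0 < |(M dmin).det| := by
    rw [abs_pos]
    have := hinv dmin ((hmem dmin).mp hdminmem)
    rw [Matrix.isUnit_iff_isUnit_det, isUnit_iff_ne_zero] at this
    exact this
  -- max of ‖adjugate‖
  have hadjcont : Continuous fun d => ‖(M d).adjugate‖ :=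
    (Continuous.matrix_adjugate hMcont).norm
  obtain ⟨dmax, hdmaxmem, hdmax⟩ := hcpt.exists_isMaxOn hne hadjcont.continuousOn
  refine ⟨‖(M dmax).adjugate‖ / |(M dmin).det| + 1, by positivity, ?_⟩
  intro d hd v
  have hdmem : d ∈ Metric.closedBall (0 : m → ℝ) 1 := (hmem d).mpr hd
  have hu : IsUnit (M d) := hinv d hd
  have hudet : IsUnit (M d).det := (Matrix.isUnit_iff_isUnit_det _).mp hu
  have hinvnorm : ‖(M d)⁻¹‖ ≤ ‖(M dmax).adjugate‖ / |(M dmin).det| := by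
    rw [Matrix.inv_def, Ring.inverse_eq_inv']
    rw [norm_smul, Real.norm_eq_abs, abs_inv]
    rw [div_eq_inv_mul]
    apply mul_le_mul
    · apply inv_anti₀ hdetpos
      exact hdmin hdmem
    · exact hdmax hdmem
    · exact norm_nonneg _
    · positivity
  calc ‖v‖ = ‖(M d)⁻¹ *ᵥ ((M d) *ᵥ v)‖ := by
        rw [Matrix.mulVec_mulVec, Matrix.nonsing_inv_mul _ hudet, Matrix.one_mulVec]
    _ ≤ ‖(M d)⁻¹‖ * ‖(M d) *ᵥ v‖ := Matrix.linfty_opNorm_mulVec _ _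
    _ ≤ (‖(M dmax).adjugate‖ / |(M dmin).det| + 1) * ‖(M d) *ᵥ v‖ := by
        apply mul_le_mul_of_nonneg_right _ (norm_nonneg _)
        linarith


/-- The absolute value map on vectors. -/
def vecAbs (z : m → ℝ) : m → ℝ := fun i => |z i|

lemma vecAbs_lip (z w : m → ℝ) : ‖vecAbs z - vecAbs w‖ ≤ ‖z - w‖ := by
  rw [pi_norm_le_iff_of_nonneg (norm_nonneg _)]
  intro i
  simp only [Pi.sub_apply, vecAbs, Real.norm_eq_abs]
  calc |(|z i| - |w i|)| ≤ |z i - w i| := abs_abs_sub_abs_le_abs_sub _ _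
    _ ≤ ‖z - w‖ := by
        have := norm_le_pi_norm (z - w) i
        simpa [Real.norm_eq_abs] using this

/-- Mean-value style factorization of the difference of the AVE map. -/
lemma ave_diff (R S : Matrix m m ℝ) (t : ℝ) (z w : m → ℝ) :
    ∃ d : m → ℝ, (∀ i, |d i| ≤ |t|) ∧
      (R *ᵥ z + t • (S *ᵥ vecAbs z)) - (R *ᵥ w + t • (S *ᵥ vecAbs w))
        = (R + S * Matrix.diagonal d) *ᵥ (z - w) := by
  refine ⟨fun i => if z i = w i then 0 else t * ((|z i| - |w i|) / (z i - w i)), ?_, ?_⟩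
  · intro i
    by_cases h : z i = w i
    · simp [h, abs_nonneg]
    · simp only [h, if_false, abs_mul]
      have hzw : z i - w i ≠ 0 := sub_ne_zero_of_ne h
      have : |(|z i| - |w i|) / (z i - w i)| ≤ 1 := by
        rw [abs_div, div_le_one (abs_pos.mpr hzw)]
        exact abs_abs_sub_abs_le_abs_sub _ _
      calc |t| * |(|z i| - |w i|) / (z i - w i)| ≤ |t| * 1 :=
            mul_le_mul_of_nonneg_left this (abs_nonneg t)
        _ = |t| := mul_one _
  · have h1 : Matrix.diagonal (fun i => if z i = w i then 0
        else t * ((|z i| - |w i|) / (z i - w i))) *ᵥ (z - w)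
        = t • (vecAbs z - vecAbs w) := by
      funext i
      rw [Matrix.mulVec_diagonal]
      by_cases h : z i = w i
      · simp [h, vecAbs]
      · have hzw : z i - w i ≠ 0 := sub_ne_zero_of_ne h
        simp only [if_neg h, Pi.sub_apply, Pi.smul_apply, vecAbs, smul_eq_mul]
        field_simp
    rw [Matrix.add_mulVec, ← Matrix.mulVec_mulVec, h1, Matrix.mulVec_smul, Matrix.mulVec_sub,
      Matrix.mulVec_sub, smul_sub]
    abel

lemma ave_existsUnique (R S : Matrix m m ℝ)
    (hinv : ∀ d : m → ℝ, (∀ i, |d i| ≤ 1) → IsUnit (R + S * Matrix.diagonal d))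
    (K : ℝ) (hK : 0 < K)
    (hKb : ∀ d : m → ℝ, (∀ i, |d i| ≤ 1) →
      ∀ v : m → ℝ, ‖v‖ ≤ K * ‖(R + S * Matrix.diagonal d) *ᵥ v‖) :
    ∀ f : m → ℝ, ∃! z : m → ℝ, R *ᵥ z + S *ᵥ vecAbs z = f := by
  -- distance bound for the homotopy maps, |t| ≤ 1
  have hdist : ∀ t : ℝ, |t| ≤ 1 → ∀ z w : m → ℝ,
      ‖z - w‖ ≤ K * ‖(R *ᵥ z + t • (S *ᵥ vecAbs z)) - (R *ᵥ w + t • (S *ᵥ vecAbs w))‖ := by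
    intro t ht z w
    obtain ⟨d, hd, hdiff⟩ := ave_diff R S t z w
    rw [hdiff]
    exact hKb d (fun i => (hd i).trans ht) (z - w)
  -- step size
  set δ : ℝ := (K * (‖S‖ + 1))⁻¹ / 2 with hδ
  have hδpos : 0 < δ := by
    have : 0 < K * (‖S‖ + 1) := by positivity
    positivity
  -- step lemma
  have hstep : ∀ t ε : ℝ, 0 ≤ t → 0 ≤ ε → ε ≤ δ → |t| ≤ 1 →
      (∀ f, ∃ z, R *ᵥ z + t • (S *ᵥ vecAbs z) = f) →
      (∀ f, ∃ z, R *ᵥ z + (t + ε) • (S *ᵥ vecAbs z) = f) := by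
    intro t ε ht hε hεδ ht1 hsurj f
    have hsurj' : ∀ y : m → ℝ, ∃ x, R *ᵥ x + t • (S *ᵥ vecAbs x) = y := hsurj
    set g : (m → ℝ) → (m → ℝ) := fun z =>
      Classical.choose (hsurj' (f - ε • (S *ᵥ vecAbs z))) with hg
    have hgspec : ∀ z, R *ᵥ (g z) + t • (S *ᵥ vecAbs (g z)) = f - ε • (S *ᵥ vecAbs z) :=
      fun z => Classical.choose_spec (hsurj' (f - ε • (S *ᵥ vecAbs z)))
    have hglip : LipschitzWith (1/2 : ℝ≥0) g := by
      apply LipschitzWith.of_dist_le_mul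
      intro z w
      rw [dist_eq_norm, dist_eq_norm]
      have h1 : ‖g z - g w‖ ≤ K * ‖(R *ᵥ (g z) + t • (S *ᵥ vecAbs (g z)))
          - (R *ᵥ (g w) + t • (S *ᵥ vecAbs (g w)))‖ := hdist t ht1 _ _
      rw [hgspec, hgspec] at h1
      have h2 : (f - ε • (S *ᵥ vecAbs z)) - (f - ε • (S *ᵥ vecAbs w))
          = (-ε) • (S *ᵥ (vecAbs z - vecAbs w)) := by
        funext i
        simp only [Matrix.mulVec_sub, Pi.sub_apply, Pi.smul_apply, Pi.neg_apply, smul_eq_mul,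
          neg_smul]
        ring
      rw [h2, norm_smul, norm_neg, Real.norm_eq_abs, abs_of_nonneg hε] at h1
      have h3 : ‖S *ᵥ (vecAbs z - vecAbs w)‖ ≤ ‖S‖ * ‖z - w‖ :=
        (Matrix.linfty_opNorm_mulVec _ _).trans
          (mul_le_mul_of_nonneg_left (vecAbs_lip z w) (norm_nonneg _))
      have h4 : K * (ε * ‖S *ᵥ (vecAbs z - vecAbs w)‖) ≤ K * (δ * (‖S‖ * ‖z - w‖)) := by
        apply mul_le_mul_of_nonneg_left _ hK.le
        apply mul_le_mul hεδ h3 (norm_nonneg _) hδpos.le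
      have h5 : K * (δ * (‖S‖ * ‖z - w‖)) ≤ (1/2) * ‖z - w‖ := by
        rw [hδ]
        have hpos : 0 < K * (‖S‖ + 1) := by positivity
        have : K * ((K * (‖S‖ + 1))⁻¹ / 2 * (‖S‖ * ‖z - w‖))
            = (K * ‖S‖ / (K * (‖S‖ + 1))) * (‖z - w‖ / 2) := by
          field_simp
        rw [this]
        have hfrac : K * ‖S‖ / (K * (‖S‖ + 1)) ≤ 1 := by
          rw [div_le_one hpos]
          nlinarith [norm_nonneg S]
        calc (K * ‖S‖ / (K * (‖S‖ + 1))) * (‖z - w‖ / 2) ≤ 1 * (‖z - w‖ / 2) := by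
              apply mul_le_mul_of_nonneg_right hfrac (by positivity)
          _ = (1/2) * ‖z - w‖ := by ring
      push_cast
      linarith
    have hcontr : ContractingWith (1/2 : ℝ≥0) g := ⟨by exact_mod_cast (by norm_num : (1/2 : ℝ) < 1), hglip⟩
    obtain ⟨z, hz, -⟩ := hcontr.exists_fixedPoint (0 : m → ℝ) (edist_ne_top _ _)
    refine ⟨z, ?_⟩
    have hspec := hgspec z
    rw [hz] at hspec
    rw [eq_sub_iff_add_eq] at hspec
    rw [← hspec, add_smul]
    abel
  -- iterate the step
  obtain ⟨M, hM⟩ := exists_nat_ge (1 / δ)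
  have hMpos : 0 < (M : ℝ) := lt_of_lt_of_le (by positivity) hM
  have hMδ : 1 / (M : ℝ) ≤ δ := by
    rw [div_le_iff₀ hMpos]
    rw [div_le_iff₀ hδpos] at hM
    nlinarith
  have hP : ∀ k : ℕ, k ≤ M → ∀ f, ∃ z, R *ᵥ z + ((k : ℝ) / M) • (S *ᵥ vecAbs z) = f := by
    intro k
    induction k with
    | zero =>
      intro _ f
      have hR : IsUnit R := by
        have := hinv 0 (fun i => by simp)
        have h0 : Matrix.diagonal (0 : m → ℝ) = 0 := Matrix.diagonal_zero
        rwa [h0, mul_zero, add_zero] at this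
      refine ⟨R⁻¹ *ᵥ f, ?_⟩
      simp only [Nat.cast_zero, zero_div, zero_smul, add_zero]
      rw [Matrix.mulVec_mulVec, Matrix.mul_nonsing_inv _ ((Matrix.isUnit_iff_isUnit_det _).mp hR),
        Matrix.one_mulVec]
    | succ k ih =>
      intro hk f
      have hk' : k ≤ M := Nat.le_of_succ_le hk
      have h1 : ((k : ℝ) + 1) / M = (k : ℝ) / M + 1 / M := by ring
      have ht0 : 0 ≤ (k : ℝ) / M := by positivity
      have ht1 : |(k : ℝ) / M| ≤ 1 := by
        rw [abs_of_nonneg ht0, div_le_one hMpos]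
        exact_mod_cast hk'
      have := hstep ((k : ℝ) / M) (1 / M) ht0 (by positivity) hMδ ht1 (ih hk') f
      obtain ⟨z, hz⟩ := this
      refine ⟨z, ?_⟩
      rw [Nat.cast_succ, h1]
      exact hz
  -- conclude
  intro f
  have hex : ∃ z, R *ᵥ z + S *ᵥ vecAbs z = f := by
    obtain ⟨z, hz⟩ := hP M le_rfl f
    refine ⟨z, ?_⟩
    rw [div_self (ne_of_gt hMpos), one_smul] at hz
    exact hz
  obtain ⟨z, hz⟩ := hex
  refine ⟨z, hz, ?_⟩
  intro w hw
  have h1 : ‖w - z‖ ≤ K * ‖(R *ᵥ w + (1 : ℝ) • (S *ᵥ vecAbs w))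
      - (R *ᵥ z + (1 : ℝ) • (S *ᵥ vecAbs z))‖ := hdist 1 (by norm_num) w z
  simp only [one_smul, hz, hw, sub_self, norm_zero, mul_zero] at h1
  have h2 : ‖w - z‖ = 0 := le_antisymm h1 (norm_nonneg _)
  exact sub_eq_zero.mp (norm_eq_zero.mp h2)


end aux

section kron
variable {n : ℕ}

lemma kron_one_mulVec (M Y : Matrix (Fin n) (Fin n) ℝ) (q : Fin n × Fin n) :
    (((1 : Matrix (Fin n) (Fin n) ℝ) ⊗ₖ M) *ᵥ fun p : Fin n × Fin n => Y p.2 p.1) q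
      = (M * Y) q.2 q.1 := by
  simp only [Matrix.mulVec, dotProduct, Fintype.sum_prod_type,
    Matrix.kroneckerMap_apply, Matrix.one_apply, Matrix.mul_apply, ite_mul, one_mul, zero_mul]
  rw [Finset.sum_comm]
  congr 1
  funext j
  rw [Finset.sum_ite_eq (Finset.univ) q.1 (fun j1 => M q.2 j * Y j j1)]
  simp


end kron

/-- With R = I ⊗ (AC⁻¹), S = I ⊗ B, if each diagonal entry of R+S has the same sign
as the corresponding diagonal entry of R−S, and both R+S and R−S are strictly
diagonally dominant by columns, then for every F the NGAVME AX + B|CX| = F has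
exactly one solution. -/
theorem ngavme_unique_of_diag_dominant {n : ℕ} (A B C : Matrix (Fin n) (Fin n) ℝ)
    (hC : IsUnit C)
    (hsign : ∀ i : Fin n × Fin n,
      0 < ((1 : Matrix (Fin n) (Fin n) ℝ) ⊗ₖ (A * C⁻¹) + (1 : Matrix (Fin n) (Fin n) ℝ) ⊗ₖ B) i i *
          ((1 : Matrix (Fin n) (Fin n) ℝ) ⊗ₖ (A * C⁻¹) - (1 : Matrix (Fin n) (Fin n) ℝ) ⊗ₖ B) i i)
    (hdom₁ : StrictlyDiagDominantByColumns
      ((1 : Matrix (Fin n) (Fin n) ℝ) ⊗ₖ (A * C⁻¹) + (1 : Matrix (Fin n) (Fin n) ℝ) ⊗ₖ B))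
    (hdom₂ : StrictlyDiagDominantByColumns
      ((1 : Matrix (Fin n) (Fin n) ℝ) ⊗ₖ (A * C⁻¹) - (1 : Matrix (Fin n) (Fin n) ℝ) ⊗ₖ B)) :
    ∀ F : Matrix (Fin n) (Fin n) ℝ,
      ∃! X : Matrix (Fin n) (Fin n) ℝ, A * X + B * matAbs (C * X) = F := by
  intro F
  set R : Matrix (Fin n × Fin n) (Fin n × Fin n) ℝ :=
    (1 : Matrix (Fin n) (Fin n) ℝ) ⊗ₖ (A * C⁻¹) with hR
  set S : Matrix (Fin n × Fin n) (Fin n × Fin n) ℝ :=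
    (1 : Matrix (Fin n) (Fin n) ℝ) ⊗ₖ B with hS
  have hinv : ∀ d : Fin n × Fin n → ℝ, (∀ i, |d i| ≤ 1) → IsUnit (R + S * Matrix.diagonal d) :=
    isUnit_add_mul_diagonal R S hsign hdom₁ hdom₂
  obtain ⟨K, hK, hKb⟩ := exists_unif_bound R S hinv
  have huniq := ave_existsUnique R S hinv K hK hKb (fun p => F p.2 p.1)
  -- basic facts about C
  have hCdet : IsUnit C.det := (Matrix.isUnit_iff_isUnit_det C).mp hC
  have hCiC : C⁻¹ * C = 1 := Matrix.nonsing_inv_mul C hCdet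
  have hCCi : C * C⁻¹ = 1 := Matrix.mul_nonsing_inv C hCdet
  -- the vectorization of a prospective solution
  have hvec : ∀ X : Matrix (Fin n) (Fin n) ℝ,
      (A * X + B * matAbs (C * X) = F) ↔
      (R *ᵥ (fun p : Fin n × Fin n => (C * X) p.2 p.1)
        + S *ᵥ vecAbs (fun p : Fin n × Fin n => (C * X) p.2 p.1) = fun p => F p.2 p.1) := by
    intro X
    have hAX : (A * C⁻¹) * (C * X) = A * X := by
      rw [Matrix.mul_assoc, ← Matrix.mul_assoc C⁻¹ C X, hCiC, Matrix.one_mul]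
    have habs : vecAbs (fun p : Fin n × Fin n => (C * X) p.2 p.1)
        = fun p : Fin n × Fin n => matAbs (C * X) p.2 p.1 := rfl
    have hpoint : ∀ q : Fin n × Fin n,
        (R *ᵥ (fun p : Fin n × Fin n => (C * X) p.2 p.1)
          + S *ᵥ vecAbs (fun p : Fin n × Fin n => (C * X) p.2 p.1)) q
        = (A * X + B * matAbs (C * X)) q.2 q.1 := by
      intro q
      rw [Pi.add_apply, habs, hR, hS, kron_one_mulVec, kron_one_mulVec, hAX, Matrix.add_apply]
    constructor
    · intro h
      funext q
      rw [hpoint q, h]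
    · intro h
      ext i j
      have := hpoint (j, i)
      rw [h] at this
      exact this.symm
  obtain ⟨z₀, hz₀, huz₀⟩ := huniq
  set X₀ : Matrix (Fin n) (Fin n) ℝ := C⁻¹ * Matrix.of (fun i j => z₀ (j, i)) with hX₀
  have hCX₀ : C * X₀ = Matrix.of (fun i j => z₀ (j, i)) := by
    rw [hX₀, ← Matrix.mul_assoc, hCCi, Matrix.one_mul]
  have hz₀' : (fun p : Fin n × Fin n => (C * X₀) p.2 p.1) = z₀ := by
    funext p
    rw [hCX₀]
    rfl
  refine ⟨X₀, ?_, ?_⟩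
  · show A * X₀ + B * matAbs (C * X₀) = F
    rw [hvec X₀, hz₀']
    exact hz₀
  · intro X' hX'
    have hz' : (fun p : Fin n × Fin n => (C * X') p.2 p.1) = z₀ :=
      huz₀ _ ((hvec X').mp hX')
    have hCX' : C * X' = C * X₀ := by
      ext i j
      have := congrFun hz' (j, i)
      rw [hCX₀]
      exact this
    calc X' = (C⁻¹ * C) * X' := by rw [hCiC, Matrix.one_mul]
      _ = C⁻¹ * (C * X') := by rw [Matrix.mul_assoc]
      _ = C⁻¹ * (C * X₀) := by rw [hCX']
      _ = (C⁻¹ * C) * X₀ := by rw [Matrix.mul_assoc]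
      _ = X₀ := by rw [hCiC, Matrix.one_mul]
end

section
/- Let A, B, K, L ∈ ℝ^{n×n} with B and L invertible. If σ_min(KL⁻¹) · σ_min(B⁻¹A) > 1, then for every F ∈ ℝ^{n×n} the Sylvester-like absolute value equation AXK + B|X|L = F has exactly one solution X ∈ ℝ^{n×n}. -/
/-!
Multiplying by `B⁻¹` on the left and by `L⁻¹` on the right turns the equation into
`P X Q + |X| = B⁻¹ F L⁻¹` with `P = B⁻¹ A` and `Q = K L⁻¹`. For the Frobenius norm,
`‖P Z Q‖ ≥ σ_min(P) σ_min(Q) ‖Z‖` (the Rayleigh bound `xᵀ MᵀM x ≥ σ_min(M)² xᵀx`, applied to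
the columns and then to the rows of `Z`), whereas `X ↦ |X|` is `1`-Lipschitz. Hence, as
`σ_min(P) σ_min(Q) > 1`, the map `X ↦ P⁻¹ (B⁻¹ F L⁻¹ - |X|) Q⁻¹` is a contraction, and its unique
fixed point is the unique solution.
-/

open Matrix

open scoped NNReal

theorem existsUnique_add_eq_of_antilipschitzWith {E F : Type*} [MetricSpace E] [CompleteSpace E]
    [SeminormedAddCommGroup F] (T : E ≃ F) {f : E → F} {Kt Kf : ℝ≥0}
    (hT : AntilipschitzWith Kt T) (hf : LipschitzWith Kf f) (hK : Kt * Kf < 1) (y : F) :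
    ∃! x, T x + f x = y := by
  have : Nonempty E := ⟨T.symm y⟩
  set g : E → E := fun x => T.symm (y - f x)
  have hg : ContractingWith (Kt * Kf) g :=
    ⟨hK, (hT.to_rightInverse T.right_inv).comp <|
      LipschitzWith.of_dist_le_mul fun a b => by rw [dist_sub_left]; exact hf.dist_le_mul a b⟩
  have hfix : ∀ x, T x + f x = y ↔ Function.IsFixedPt g x := fun x => by
    rw [Function.IsFixedPt, T.symm_apply_eq, sub_eq_iff_eq_add, eq_comm]
  exact ⟨hg.fixedPoint g, (hfix _).2 hg.fixedPoint_isFixedPt,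
    fun x hx => hg.fixedPoint_unique ((hfix x).1 hx)⟩

namespace Matrix

theorem posSemidef_transpose_mul_self {m : Type*} [Fintype m] (M : Matrix m m ℝ) :
    (Mᵀ * M).PosSemidef := by
  simpa [conjTranspose_eq_transpose_of_trivial] using posSemidef_conjTranspose_mul_self M

variable {m : Type*} [Fintype m] [DecidableEq m]

open scoped MatrixOrder

theorem sInf_spectrum_transpose_mul_self_nonneg (M : Matrix m m ℝ) :
    0 ≤ sInf (spectrum ℝ (Mᵀ * M)) :=
  Real.sInf_nonneg fun _ hx => spectrum_nonneg_of_nonneg (posSemidef_transpose_mul_self M).nonneg hx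

theorem sInf_spectrum_transpose_mul_self_mul_dotProduct_le (M : Matrix m m ℝ) (x : m → ℝ) :
    sInf (spectrum ℝ (Mᵀ * M)) * (x ⬝ᵥ x) ≤ (M *ᵥ x) ⬝ᵥ (M *ᵥ x) := by
  have hle : algebraMap ℝ (Matrix m m ℝ) (sInf (spectrum ℝ (Mᵀ * M))) ≤ Mᵀ * M :=
    (algebraMap_le_iff_le_spectrum (posSemidef_transpose_mul_self M).isHermitian).2 fun _ hx =>
      csInf_le finite_real_spectrum.bddBelow hx
  have := (le_iff.1 hle).dotProduct_mulVec_nonneg x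
  rwa [star_trivial, Algebra.algebraMap_eq_smul_one, sub_mulVec, smul_mulVec, one_mulVec,
    dotProduct_sub, dotProduct_smul, ← mulVec_mulVec, dotProduct_mulVec, vecMul_transpose,
    smul_eq_mul, sub_nonneg] at this

theorem mul_mul_add_mul_mul_eq_iff {R : Type*} [CommRing R] {A B K L : Matrix m m R}
    (hB : IsUnit B) (hL : IsUnit L) (X M F : Matrix m m R) :
    A * X * K + B * M * L = F ↔ B⁻¹ * A * X * (K * L⁻¹) + M = B⁻¹ * F * L⁻¹ := by
  obtain ⟨u, rfl⟩ := hB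
  obtain ⟨v, rfl⟩ := hL
  rw [← coe_units_inv, ← coe_units_inv,
    ← ((Units.mulLeft u⁻¹).trans (Units.mulRight v⁻¹)).apply_eq_iff_eq]
  simp [Matrix.mul_add, Matrix.add_mul, mul_assoc]

end Matrix

section SigmaMin

variable {n : ℕ}

theorem sigmaMin_nonneg (M : Matrix (Fin n) (Fin n) ℝ) : 0 ≤ sigmaMin M := Real.sqrt_nonneg _

theorem sigmaMin_sq (M : Matrix (Fin n) (Fin n) ℝ) :
    sigmaMin M ^ 2 = sInf (spectrum ℝ (Mᵀ * M)) :=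
  Real.sq_sqrt (sInf_spectrum_transpose_mul_self_nonneg M)

theorem sigmaMin_transpose (M : Matrix (Fin n) (Fin n) ℝ) : sigmaMin Mᵀ = sigmaMin M := by
  have : spectrum ℝ (M * Mᵀ) = spectrum ℝ (Mᵀ * M) := by
    ext; simp only [mem_spectrum_iff_isRoot_charpoly, charpoly_mul_comm]
  rw [sigmaMin, sigmaMin, transpose_transpose, this]

theorem isUnit_of_sigmaMin_pos {M : Matrix (Fin n) (Fin n) ℝ} (hM : 0 < sigmaMin M) : IsUnit M := by
  rw [isUnit_iff_isUnit_det, isUnit_iff_ne_zero, ne_eq, ← exists_mulVec_eq_zero_iff]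
  rintro ⟨v, hv, hMv⟩
  have hle := sInf_spectrum_transpose_mul_self_mul_dotProduct_le M v
  rw [hMv, zero_dotProduct, ← sigmaMin_sq] at hle
  have hvv : v ⬝ᵥ v ≤ 0 := nonpos_of_mul_nonpos_right hle (by positivity)
  exact hv (dotProduct_self_eq_zero.1 (le_antisymm hvv (dotProduct_self_star_nonneg v)))

end SigmaMin

attribute [local instance] Matrix.frobeniusNormedAddCommGroup Matrix.frobeniusNormedSpace

theorem Matrix.frobenius_norm_sq_eq_sum_dotProduct {ι κ : Type*} [Fintype ι] [Fintype κ]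
    (A : Matrix ι κ ℝ) : ‖A‖ ^ 2 = ∑ i, A i ⬝ᵥ A i := by
  rw [frobenius_norm_def, ← Real.sqrt_eq_rpow, Real.sq_sqrt (by positivity)]
  simp [dotProduct, sq]

section FrobeniusSigmaMin

variable {n : ℕ}

theorem norm_mul_sigmaMin_le_norm_mul_transpose {ι : Type*} [Fintype ι]
    (Z : Matrix ι (Fin n) ℝ) (M : Matrix (Fin n) (Fin n) ℝ) : ‖Z‖ * sigmaMin M ≤ ‖Z * Mᵀ‖ := by
  refine (pow_le_pow_iff_left₀ (mul_nonneg (norm_nonneg _) (sigmaMin_nonneg M)) (norm_nonneg _)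
    two_ne_zero).1 ?_
  calc (‖Z‖ * sigmaMin M) ^ 2 = ∑ i, sInf (spectrum ℝ (Mᵀ * M)) * (Z i ⬝ᵥ Z i) := by
        rw [mul_pow, sigmaMin_sq, frobenius_norm_sq_eq_sum_dotProduct, Finset.sum_mul]
        simp_rw [mul_comm]
    _ ≤ ∑ i, (M *ᵥ Z i) ⬝ᵥ (M *ᵥ Z i) :=
        Finset.sum_le_sum fun i _ => sInf_spectrum_transpose_mul_self_mul_dotProduct_le M (Z i)
    _ = ‖Z * Mᵀ‖ ^ 2 := by
        rw [frobenius_norm_sq_eq_sum_dotProduct]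
        simp_rw [← vecMul_transpose]
        rfl

theorem norm_mul_sigmaMin_le_norm_mul {ι : Type*} [Fintype ι]
    (Z : Matrix ι (Fin n) ℝ) (M : Matrix (Fin n) (Fin n) ℝ) : ‖Z‖ * sigmaMin M ≤ ‖Z * M‖ := by
  simpa [sigmaMin_transpose] using norm_mul_sigmaMin_le_norm_mul_transpose Z Mᵀ

theorem sigmaMin_mul_norm_le_norm_mul {ι : Type*} [Fintype ι]
    (M : Matrix (Fin n) (Fin n) ℝ) (Z : Matrix (Fin n) ι ℝ) : sigmaMin M * ‖Z‖ ≤ ‖M * Z‖ := by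
  simpa [mul_comm, ← transpose_mul] using norm_mul_sigmaMin_le_norm_mul_transpose Zᵀ M

theorem sigmaMin_mul_sigmaMin_mul_norm_le (P Q Z : Matrix (Fin n) (Fin n) ℝ) :
    sigmaMin P * sigmaMin Q * ‖Z‖ ≤ ‖P * Z * Q‖ :=
  calc sigmaMin P * sigmaMin Q * ‖Z‖ = sigmaMin P * (‖Z‖ * sigmaMin Q) := by ring
    _ ≤ sigmaMin P * ‖Z * Q‖ :=
        mul_le_mul_of_nonneg_left (norm_mul_sigmaMin_le_norm_mul Z Q) (sigmaMin_nonneg P)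
    _ ≤ ‖P * Z * Q‖ := by rw [mul_assoc]; exact sigmaMin_mul_norm_le_norm_mul P (Z * Q)

theorem antilipschitzWith_mul_mul {P Q : Matrix (Fin n) (Fin n) ℝ}
    (h : 0 < sigmaMin P * sigmaMin Q) :
    AntilipschitzWith (Real.toNNReal (sigmaMin P * sigmaMin Q))⁻¹ fun X => P * X * Q :=
  AntilipschitzWith.of_le_mul_dist fun X Y => by
    rw [NNReal.coe_inv, Real.coe_toNNReal _ h.le, dist_eq_norm, dist_eq_norm, ← Matrix.sub_mul,
      ← Matrix.mul_sub, inv_mul_eq_div, le_div_iff₀' h]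
    exact sigmaMin_mul_sigmaMin_mul_norm_le P Q (X - Y)

theorem lipschitzWith_matAbs : LipschitzWith 1 (matAbs : Matrix (Fin n) (Fin n) ℝ → _) :=
  LipschitzWith.of_dist_le_mul fun X Y => by
    rw [NNReal.coe_one, one_mul, dist_eq_norm, dist_eq_norm, frobenius_norm_def,
      frobenius_norm_def]
    gcongr with i _ j _
    exact abs_abs_sub_abs_le_abs_sub _ _

end FrobeniusSigmaMin

/-- If B and L are invertible and σ_min(KL⁻¹)·σ_min(B⁻¹A) > 1, then for every F
the Sylvester-like AVE AXK + B|X|L = F has exactly one solution. -/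
theorem sylvester_ave_unique {n : ℕ} (A B K L : Matrix (Fin n) (Fin n) ℝ)
    (hB : IsUnit B) (hL : IsUnit L)
    (h : 1 < sigmaMin (K * L⁻¹) * sigmaMin (B⁻¹ * A)) :
    ∀ F : Matrix (Fin n) (Fin n) ℝ,
      ∃! X : Matrix (Fin n) (Fin n) ℝ, A * X * K + B * matAbs X * L = F := by
  intro F
  rw [mul_comm] at h
  have hPQ := one_pos.trans h
  have hP := isUnit_of_sigmaMin_pos (pos_of_mul_pos_left hPQ (sigmaMin_nonneg _))
  have hQ := isUnit_of_sigmaMin_pos (pos_of_mul_pos_right hPQ (sigmaMin_nonneg _))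
  let T := (Units.mulLeft hP.unit).trans (Units.mulRight hQ.unit)
  refine (existsUnique_congr fun X => mul_mul_add_mul_mul_eq_iff hB hL X (matAbs X) F).2 ?_
  refine existsUnique_add_eq_of_antilipschitzWith T (antilipschitzWith_mul_mul hPQ)
    lipschitzWith_matAbs ?_ _
  rw [mul_one]
  exact inv_lt_one_of_one_lt₀ (Real.one_lt_toNNReal.2 h)
end
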